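/- arXiv:2011.04160 — 2 statements merged into one kernel-verified Lean document; each statement's English description precedes it below -/
import Mathlib

section
/- Let (G,m,w,B) be a connected weighted finite graph with boundary. Then for every i = 1, 2, …, |Ω|, the (i+|B|)-th Laplacian eigenvalue dominates the i-th Dirichlet eigenvalue: μ_{i+|B|} ≥ λ_i. -/
open Finset

noncomputable section

/-- The weighted graph Laplacian `Δ`. -/
def glap {V : Type*} [Fintype V] (m : V → ℝ) (w : V → V → ℝ) (u : V → ℝ) (x : V) : ℝ :=
  (1 / m x) * ∑ y, (u y - u x) * w x y

/-- Extension by zero to the boundary. -/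
def E0 {V : Type*} [DecidableEq V] (B : Finset V) (u : {x : V // x ∉ B} → ℝ) (x : V) : ℝ :=
  if h : x ∈ B then 0 else u ⟨x, h⟩

/-- The normal extension. -/
def N0 {V : Type*} [Fintype V] [DecidableEq V] (w : V → V → ℝ) (B : Finset V)
    (u : {x : V // x ∉ B} → ℝ) (x : V) : ℝ :=
  if h : x ∈ B then
    (∑ y : {x : V // x ∉ B}, u y * w x y.1) / (∑ y : {x : V // x ∉ B}, w x y.1)
  else u ⟨x, h⟩

/-- The Dirichlet Laplacian `Δ^D`. -/
def dlap {V : Type*} [Fintype V] [DecidableEq V] (m : V → ℝ) (w : V → V → ℝ) (B : Finset V)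
    (u : {x : V // x ∉ B} → ℝ) (x : {x : V // x ∉ B}) : ℝ :=
  glap m w (E0 B u) x.1

/-- The Neumann Laplacian `Δ^N`. -/
def nlap {V : Type*} [Fintype V] [DecidableEq V] (m : V → ℝ) (w : V → V → ℝ) (B : Finset V)
    (u : {x : V // x ∉ B} → ℝ) (x : {x : V // x ∉ B}) : ℝ :=
  glap m w (N0 w B u) x.1

/-- The Laplacian `Δ_Ω` of the induced interior subgraph. -/
def olap {V : Type*} [Fintype V] [DecidableEq V] (m : V → ℝ) (w : V → V → ℝ) (B : Finset V)
    (u : {x : V // x ∉ B} → ℝ) (x : {x : V // x ∉ B}) : ℝ :=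
  (1 / m x.1) * ∑ y : {x : V // x ∉ B}, (u y - u x) * w x.1 y.1

/-- The weighted boundary vertex degree `Deg_b`. -/
def degb {V : Type*} [DecidableEq V] (m : V → ℝ) (w : V → V → ℝ) (B : Finset V) (x : V) : ℝ :=
  (1 / m x) * ∑ y ∈ B, w x y

/-- The operator `T = A_B ∘ Deg⁻¹ ∘ A_Ω`. -/
def bop {V : Type*} [Fintype V] [DecidableEq V] (m : V → ℝ) (w : V → V → ℝ) (B : Finset V)
    (u : {x : V // x ∉ B} → ℝ) (z : {x : V // x ∉ B}) : ℝ :=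
  (1 / m z.1) * ∑ x ∈ B, w x z.1 *
    ((∑ y : {x : V // x ∉ B}, u y * w x y.1) / (∑ y : {x : V // x ∉ B}, w x y.1))

/-- The Bakry–Émery `Γ` operator of a Laplacian-type operator `L`. -/
def gam {W : Type*} (L : (W → ℝ) → (W → ℝ)) (f g : W → ℝ) (x : W) : ℝ :=
  (L (fun y => f y * g y) x - f x * L g x - g x * L f x) / 2

/-- The Bakry–Émery `Γ₂` operator of a Laplacian-type operator `L`. -/
def gam2 {W : Type*} (L : (W → ℝ) → (W → ℝ)) (f : W → ℝ) (x : W) : ℝ :=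
  L (gam L f f) x / 2 - gam L f (L f) x

/-- `e` is a complete list of the eigenvalues of `L` : there is a corresponding eigenbasis
which is orthonormal with respect to the inner product weighted by `m`. -/
def IsEigenBasis {n : ℕ} {W : Type*} [Fintype W] (m : W → ℝ)
    (L : (W → ℝ) → (W → ℝ)) (e : Fin n → ℝ) : Prop :=
  ∃ φ : Fin n → W → ℝ,
    (∀ i j, (∑ x, φ i x * φ j x * m x) = if i = j then 1 else 0) ∧
    ∀ i, L (φ i) = fun x => e i * φ i x

/-!
Courant–Fischer. Take the span of the first `i + |B| + 1` eigenfunctions of `-Δ`; the `|B|`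
conditions `u = 0` on `B` and the `i` conditions `u|_Ω ⊥ ψ₀, …, ψ_{i-1}` (first Dirichlet
eigenfunctions) leave a nonzero `u` in it. Its Rayleigh quotient is at most `μ_{i+|B|}` by the
choice of the span, and since `u` vanishes on `B` it equals the Dirichlet Rayleigh quotient of
`u|_Ω`, which is at least `λ_i` by the orthogonality conditions.
-/

section WeightedInner

variable {W : Type*} [Fintype W]

def wInner (m : W → ℝ) : LinearMap.BilinForm ℝ (W → ℝ) :=
  LinearMap.mk₂ ℝ (fun f g => ∑ x, f x * g x * m x)
    (fun f f' g => by simp only [Pi.add_apply, add_mul, Finset.sum_add_distrib])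
    (fun c f g => by simp only [Pi.smul_apply, smul_eq_mul, Finset.mul_sum, mul_assoc])
    (fun f g g' => by simp only [Pi.add_apply, mul_add, add_mul, Finset.sum_add_distrib])
    (fun c f g => by
      simp only [Pi.smul_apply, smul_eq_mul, Finset.mul_sum]
      exact Finset.sum_congr rfl fun x _ => by ring)

theorem wInner_apply (m : W → ℝ) (f g : W → ℝ) : wInner m f g = ∑ x, f x * g x * m x := rfl

theorem wInner_subtype_eq {p : W → Prop} [DecidablePred p] (m f g : W → ℝ)
    (hg : ∀ x, ¬ p x → g x = 0) :
    wInner (fun x : Subtype p => m x) (fun x => f x) (fun x => g x) = wInner m f g := by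
  simp only [wInner_apply]
  rw [← Fintype.sum_subtype_add_sum_subtype p, Fintype.sum_eq_zero (fun x : {x // ¬ p x} => _)
    fun x => by simp [hg x x.2], add_zero]

-- `m` is not assumed positive, so `wInner m` is only a bilinear form and Mathlib's
-- `Orthonormal` does not apply.
def WOrthonormal {ι : Type*} [DecidableEq ι] (m : W → ℝ) (φ : ι → W → ℝ) : Prop :=
  ∀ i j, wInner m (φ i) (φ j) = if i = j then 1 else 0

variable {m : W → ℝ} {ι : Type*} [Fintype ι] [DecidableEq ι] {φ : ι → W → ℝ}

theorem wInner_sum_smul_left (hφ : WOrthonormal m φ) (c : ι → ℝ) (l : ι) :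
    wInner m (∑ j, c j • φ j) (φ l) = c l := by
  simp [map_sum, LinearMap.sum_apply, hφ _ l]

theorem wInner_sum_smul (hφ : WOrthonormal m φ) (c d : ι → ℝ) :
    wInner m (∑ j, c j • φ j) (∑ j, d j • φ j) = ∑ j, c j * d j := by
  simp only [map_sum (wInner m (∑ j, c j • φ j)), map_smul, wInner_sum_smul_left hφ, smul_eq_mul,
    mul_comm]

theorem WOrthonormal.linearIndependent (hφ : WOrthonormal m φ) : LinearIndependent ℝ φ := by
  refine Fintype.linearIndependent_iff.mpr fun c hc l => ?_
  rw [← wInner_sum_smul_left hφ c l, hc, map_zero, LinearMap.zero_apply]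

end WeightedInner

section Rayleigh

variable {W ι : Type*} [Fintype W] [Fintype ι] [DecidableEq ι] {m : W → ℝ} {φ : ι → W → ℝ}
  {L : (W → ℝ) →ₗ[ℝ] (W → ℝ)} {μ : ι → ℝ}

theorem wInner_sum_smul_self_pos (hφ : WOrthonormal m φ) {c : ι → ℝ} (hc : c ≠ 0) :
    0 < wInner m (∑ j, c j • φ j) (∑ j, c j • φ j) := by
  obtain ⟨j, hj⟩ := Function.ne_iff.mp hc
  rw [wInner_sum_smul hφ]
  exact Finset.sum_pos' (fun j _ => mul_self_nonneg _) ⟨j, Finset.mem_univ _, mul_self_pos.mpr hj⟩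

theorem neg_wInner_map_sum_smul (hφ : WOrthonormal m φ) (hL : ∀ j, L (φ j) = -μ j • φ j)
    (c : ι → ℝ) :
    -wInner m (L (∑ j, c j • φ j)) (∑ j, c j • φ j) = ∑ j, μ j * (c j * c j) := by
  simp only [map_sum L, map_smul, hL, smul_smul]
  rw [wInner_sum_smul hφ, ← Finset.sum_neg_distrib]
  exact Finset.sum_congr rfl fun j _ => by ring

theorem neg_wInner_map_sum_smul_le (hφ : WOrthonormal m φ)
    (hL : ∀ j, L (φ j) = -μ j • φ j) {M : ℝ} (hM : ∀ j, μ j ≤ M) (c : ι → ℝ) :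
    -wInner m (L (∑ j, c j • φ j)) (∑ j, c j • φ j) ≤
      M * wInner m (∑ j, c j • φ j) (∑ j, c j • φ j) := by
  rw [neg_wInner_map_sum_smul hφ hL, wInner_sum_smul hφ, Finset.mul_sum]
  exact Finset.sum_le_sum fun j _ => mul_le_mul_of_nonneg_right (hM j) (mul_self_nonneg _)

theorem le_neg_wInner_map_of_orthogonal (hcard : Fintype.card ι = Fintype.card W)
    (hφ : WOrthonormal m φ) (hL : ∀ j, L (φ j) = -μ j • φ j) {M : ℝ} (v : W → ℝ)
    (hv : ∀ j, wInner m v (φ j) ≠ 0 → M ≤ μ j) :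
    M * wInner m v v ≤ -wInner m (L v) v := by
  have hspan : Submodule.span ℝ (Set.range φ) = ⊤ :=
    hφ.linearIndependent.span_eq_top_of_card_eq_finrank' (by simp [hcard])
  obtain ⟨d, rfl⟩ :=
    (Submodule.mem_span_range_iff_exists_fun ℝ (x := v)).mp (hspan ▸ Submodule.mem_top)
  rw [neg_wInner_map_sum_smul hφ hL, wInner_sum_smul hφ, Finset.mul_sum]
  refine Finset.sum_le_sum fun j _ => ?_
  by_cases hdj : d j = 0
  · simp [hdj]
  · rw [← wInner_sum_smul_left hφ d j] at hdj
    exact mul_le_mul_of_nonneg_right (hv j hdj) (mul_self_nonneg _)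

end Rayleigh

theorem exists_ne_zero_forall_dual_eq_zero {K E κ : Type*} [Field K] [AddCommGroup E] [Module K E]
    [FiniteDimensional K E] [Fintype κ] (f : κ → Module.Dual K E)
    (h : Fintype.card κ < Module.finrank K E) : ∃ x ≠ 0, ∀ z, f z x = 0 := by
  obtain ⟨x, hx, hx0⟩ := Submodule.exists_mem_ne_zero_of_ne_bot
    ((LinearMap.pi f).ker_ne_bot_of_finrank_lt (by simpa using h))
  exact ⟨x, hx0, fun z => congrFun (LinearMap.mem_ker.mp hx) z⟩

section DirichletRestriction

variable {V : Type*} [DecidableEq V]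

def E0Linear (B : Finset V) : ({x : V // x ∉ B} → ℝ) →ₗ[ℝ] (V → ℝ) where
  toFun := E0 B
  map_add' f g := by ext x; by_cases hx : x ∈ B <;> simp [E0, hx]
  map_smul' c f := by ext x; by_cases hx : x ∈ B <;> simp [E0, hx]

theorem E0_restrict_eq_self {B : Finset V} {u : V → ℝ} (hu : ∀ x ∈ B, u x = 0) :
    E0 B (fun x => u x) = u := by
  ext x
  by_cases hx : x ∈ B <;> simp [E0, hx, hu]

variable [Fintype V]

def glapLinear (m : V → ℝ) (w : V → V → ℝ) : (V → ℝ) →ₗ[ℝ] (V → ℝ) where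
  toFun := glap m w
  map_add' f g := by
    ext x
    simp only [glap, Pi.add_apply, ← mul_add, ← Finset.sum_add_distrib]
    exact congrArg _ (Finset.sum_congr rfl fun y _ => by ring)
  map_smul' c f := by
    ext x
    simp only [glap, Pi.smul_apply, smul_eq_mul, RingHom.id_apply, Finset.mul_sum]
    exact Finset.sum_congr rfl fun y _ => by ring

def dlapLinear (m : V → ℝ) (w : V → V → ℝ) (B : Finset V) :
    ({x : V // x ∉ B} → ℝ) →ₗ[ℝ] ({x : V // x ∉ B} → ℝ) :=
  LinearMap.funLeft ℝ ℝ Subtype.val ∘ₗ glapLinear m w ∘ₗ E0Linear B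

theorem coe_dlapLinear (m : V → ℝ) (w : V → V → ℝ) (B : Finset V) :
    ⇑(dlapLinear m w B) = dlap m w B :=
  rfl

theorem dlap_restrict_eq_glap (m : V → ℝ) (w : V → V → ℝ) {B : Finset V} {u : V → ℝ}
    (hu : ∀ x ∈ B, u x = 0) :
    dlap m w B (fun x => u x) = fun x : {x : V // x ∉ B} => glap m w u x := by
  funext x
  rw [dlap, E0_restrict_eq_self hu]

theorem exists_sum_smul_eq_zero_on_and_orthogonal {ι κ : Type*} [Fintype ι] [Fintype κ]
    (m : V → ℝ) (B : Finset V) (φ : ι → V → ℝ) (ψ : κ → {x : V // x ∉ B} → ℝ)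
    (h : B.card + Fintype.card κ < Fintype.card ι) :
    ∃ c : ι → ℝ, c ≠ 0 ∧ (∀ x ∈ B, (∑ j, c j • φ j) x = 0) ∧
      ∀ l, wInner (fun x : {x : V // x ∉ B} => m x) (fun x => (∑ j, c j • φ j) x) (ψ l) = 0 := by
  let comb := Fintype.linearCombination ℝ φ
  let f : B ⊕ κ → Module.Dual ℝ (ι → ℝ) := Sum.elim
    (fun x => LinearMap.proj x.1 ∘ₗ comb)
    (fun l => (wInner fun x : {x : V // x ∉ B} => m x).flip (ψ l) ∘ₗ
      LinearMap.funLeft ℝ ℝ Subtype.val ∘ₗ comb)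
  obtain ⟨c, hc0, hc⟩ := exists_ne_zero_forall_dual_eq_zero f (by simpa using h)
  exact ⟨c, hc0, fun x hx => hc (Sum.inl ⟨x, hx⟩), fun l => hc (Sum.inr l)⟩

end DirichletRestriction

theorem stmt_12 {V : Type*} [Fintype V] [DecidableEq V]
    (m : V → ℝ)
    (w : V → V → ℝ)
    (B : Finset V)
    (μ : Fin (Fintype.card V) → ℝ) (hμmono : Monotone μ)
    (hμ : IsEigenBasis m (glap m w) (fun i => -(μ i)))
    (lam : Fin (Fintype.card {x : V // x ∉ B}) → ℝ) (hlammono : Monotone lam)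
    (hlam : IsEigenBasis (fun x : {x : V // x ∉ B} => m x.1) (dlap m w B) (fun i => -(lam i)))
    (hcard : Fintype.card {x : V // x ∉ B} + B.card = Fintype.card V)
    :
    ∀ i : Fin (Fintype.card {x : V // x ∉ B}), lam i ≤ μ ⟨i.1 + B.card, by have h2 := i.2; omega⟩ := by
  intro i
  obtain ⟨φ, hφ, hφL⟩ := hμ
  obtain ⟨ψ, hψ, hψL⟩ := hlam
  have hk : i.1 + B.card + 1 ≤ Fintype.card V := by omega
  let φk := fun j : Fin (i.1 + B.card + 1) => φ (Fin.castLE hk j)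
  have hφk : WOrthonormal m φk := fun a b => by simp [φk, wInner_apply, hφ, Fin.castLE_inj]
  obtain ⟨c, hc0, huB, huψ⟩ := exists_sum_smul_eq_zero_on_and_orthogonal m B φk
    (fun l : Fin i => ψ (Fin.castLE i.2.le l)) (by simp only [Fintype.card_fin]; omega)
  have hupper := neg_wInner_map_sum_smul_le (L := glapLinear m w) hφk (fun j => hφL _)
    (M := μ ⟨i.1 + B.card, hk⟩) (fun j => hμmono (Nat.lt_succ_iff.mp j.2)) c
  have hlower := le_neg_wInner_map_of_orthogonal (L := dlapLinear m w B) (Fintype.card_fin _)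
    hψ hψL (M := lam i) (fun x => (∑ j, c j • φk j) x) fun l hl => hlammono <| by
      by_contra! hli
      exact hl (huψ ⟨l, hli⟩)
  rw [coe_dlapLinear, dlap_restrict_eq_glap m w huB,
    wInner_subtype_eq _ _ _ fun x hx => huB x (not_not.mp hx),
    wInner_subtype_eq _ _ _ fun x hx => huB x (not_not.mp hx)] at hlower
  exact le_of_mul_le_mul_right (hlower.trans hupper) (wInner_sum_smul_self_pos hφk hc0)
end
end

section
/- Let (G,m,w,B) be a connected weighted finite graph with boundary such that the induced subgraph G|_Ω is connected, and suppose the weighted graph (G|_Ω, m|_Ω, w|_Ω) satisfies the Bakry–Émery curvature-dimension condition CD(K,n) for some K > 0 and n > 1, i.e., Γ₂^Ω(f)(x) ≥ (1/n)(Δ_Ω f(x))² + K·Γ^Ω(f)(x) for every f ∈ ℝ^Ω and x ∈ Ω (where Γ^Ω, Γ₂^Ω are the Bakry–Émery operators of Δ_Ω). Then λ₂ ≥ nK/(n−1) + min_{x∈Ω} Deg_b(x) and ν₂ ≥ nK/(n−1). -/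
open Finset

noncomputable section

open Matrix

section generic
variable {W : Type*} [Fintype W] (mw : W → ℝ) (ww : W → W → ℝ)

lemma glap_smul (c : ℝ) (u : W → ℝ) :
    glap mw ww (fun y => c * u y) = fun x => c * glap mw ww u x := by
  funext x
  simp only [glap]
  rw [show (∑ y, (c * u y - c * u x) * ww x y) = c * ∑ y, (u y - u x) * ww x y by
    rw [Finset.mul_sum]; exact Finset.sum_congr rfl fun y _ => by ring]
  ring

lemma green (hm : ∀ x, mw x ≠ 0) (hsym : ∀ x y, ww x y = ww y x) (u v : W → ℝ) :
    ∑ x, mw x * u x * glap mw ww v x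
      = -(1/2) * ∑ x, ∑ y, ww x y * (u x - u y) * (v x - v y) := by
  have h1 : ∑ x, mw x * u x * glap mw ww v x = ∑ x, ∑ y, u x * ((v y - v x) * ww x y) := by
    refine Finset.sum_congr rfl fun x _ => ?_
    have hx := hm x
    have e1 : mw x * u x * glap mw ww v x = u x * ∑ y, (v y - v x) * ww x y := by
      rw [glap]; field_simp
    rw [e1, Finset.mul_sum]
  have h2 : ∑ x, ∑ y, u x * ((v y - v x) * ww x y) = ∑ x, ∑ y, u y * ((v x - v y) * ww x y) := by
    rw [Finset.sum_comm]
    exact Finset.sum_congr rfl fun x _ => Finset.sum_congr rfl fun y _ => by rw [hsym]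
  have h3 : (∑ x, ∑ y, u x * ((v y - v x) * ww x y)) + (∑ x, ∑ y, u y * ((v x - v y) * ww x y))
      = ∑ x, ∑ y, -(ww x y * (u x - u y) * (v x - v y)) := by
    rw [← Finset.sum_add_distrib]
    refine Finset.sum_congr rfl fun x _ => ?_
    rw [← Finset.sum_add_distrib]
    exact Finset.sum_congr rfl fun y _ => by ring
  have h4 : ∑ x, ∑ y, -(ww x y * (u x - u y) * (v x - v y))
      = -∑ x, ∑ y, ww x y * (u x - u y) * (v x - v y) := by
    simp [Finset.sum_neg_distrib]
  rw [h1]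
  linarith [h2, h3, h4]

lemma sum_glap (hm : ∀ x, mw x ≠ 0) (hsym : ∀ x y, ww x y = ww y x) (v : W → ℝ) :
    ∑ x, mw x * glap mw ww v x = 0 := by
  have h := green mw ww hm hsym (fun _ => 1) v
  simp only [mul_one, sub_self, zero_mul, mul_zero, Finset.sum_const_zero, neg_zero] at h
  exact h

lemma energy (hm : ∀ x, mw x ≠ 0) (hsym : ∀ x y, ww x y = ww y x) (u : W → ℝ) :
    ∑ x, mw x * u x * glap mw ww u x = -(1/2) * ∑ x, ∑ y, ww x y * (u x - u y)^2 := by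
  rw [green mw ww hm hsym u u]
  congr 1
  exact Finset.sum_congr rfl fun x _ => Finset.sum_congr rfl fun y _ => by ring

lemma gam_glap (hm : ∀ x, mw x ≠ 0) (f : W → ℝ) (x : W) :
    gam (glap mw ww) f f x = 1/(2 * mw x) * ∑ y, ww x y * (f y - f x)^2 := by
  have hx := hm x
  have key : ∑ y, ((f y * f y - f x * f x) * ww x y)
      = (∑ y, ww x y * (f y - f x)^2) + ∑ y, (2 * f x) * ((f y - f x) * ww x y) := by
    rw [← Finset.sum_add_distrib]
    exact Finset.sum_congr rfl fun y _ => by ring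
  rw [gam]
  simp only [glap]
  rw [key, ← Finset.mul_sum]
  field_simp
  ring
lemma gam_nonneg (hm : ∀ x, 0 < mw x) (hwnn : ∀ x y, 0 ≤ ww x y) (f : W → ℝ) (x : W) :
    0 ≤ gam (glap mw ww) f f x := by
  rw [gam_glap mw ww (fun x => (hm x).ne') f x]
  have : 0 ≤ ∑ y, ww x y * (f y - f x)^2 :=
    Finset.sum_nonneg fun y _ => mul_nonneg (hwnn x y) (sq_nonneg _)
  have hx := hm x
  positivity

lemma sum_gam (hm : ∀ x, mw x ≠ 0) (hsym : ∀ x y, ww x y = ww y x) (f : W → ℝ) :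
    ∑ x, mw x * gam (glap mw ww) f f x = -∑ x, mw x * f x * glap mw ww f x := by
  have h1 : ∀ x, mw x * gam (glap mw ww) f f x
      = mw x * glap mw ww (fun y => f y * f y) x / 2 - mw x * f x * glap mw ww f x := by
    intro x; rw [gam]; ring
  simp only [h1]
  rw [Finset.sum_sub_distrib]
  have h2 : ∑ x, mw x * glap mw ww (fun y => f y * f y) x / 2 = 0 := by
    rw [show (∑ x, mw x * glap mw ww (fun y => f y * f y) x / 2)
        = (∑ x, mw x * glap mw ww (fun y => f y * f y) x) / 2 by
      rw [Finset.sum_div]]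
    rw [sum_glap mw ww hm hsym]; norm_num
  rw [h2]; ring

lemma gam_eigen (f : W → ℝ) (μ : ℝ) (hf : glap mw ww f = fun x => -μ * f x) (x : W) :
    gam (glap mw ww) f (glap mw ww f) x = -μ * gam (glap mw ww) f f x := by
  rw [gam, gam]
  simp only [hf]
  have h1 : (fun y => f y * (-μ * f y)) = (fun y => -μ * (f y * f y)) := by funext y; ring
  rw [h1]
  simp only [glap_smul]
  simp only [hf]
  ring

lemma dichotomy (hm : ∀ x, 0 < mw x) (hsym : ∀ x y, ww x y = ww y x)
    (hwnn : ∀ x y, 0 ≤ ww x y) (K n : ℝ) (hK : 0 < K) (hn : 1 < n)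
    (hCD : ∀ f x, (1/n) * (glap mw ww f x)^2 + K * gam (glap mw ww) f f x
      ≤ gam2 (glap mw ww) f x)
    (f : W → ℝ) (hf0 : f ≠ 0) (μ : ℝ) (hf : glap mw ww f = fun x => -μ * f x) :
    μ = 0 ∨ n * K / (n - 1) ≤ μ := by
  have hm' : ∀ x, mw x ≠ 0 := fun x => (hm x).ne'
  set S := ∑ x, mw x * f x ^ 2 with hSdef
  have hS : 0 < S := by
    obtain ⟨x0, hx0⟩ := Function.ne_iff.mp hf0
    have hx0' : f x0 ≠ 0 := hx0
    refine Finset.sum_pos' (fun x _ => mul_nonneg (hm x).le (sq_nonneg _))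
      ⟨x0, Finset.mem_univ _, ?_⟩
    have h2 : 0 < f x0 ^ 2 := by positivity
    exact mul_pos (hm x0) h2
  have hE1 : ∑ x, mw x * gam (glap mw ww) f f x = μ * S := by
    rw [sum_gam mw ww hm' hsym f]
    rw [show -∑ x, mw x * f x * glap mw ww f x = μ * S by
      rw [hSdef, Finset.mul_sum, ← Finset.sum_neg_distrib]
      exact Finset.sum_congr rfl fun x _ => by rw [hf]; ring]
  have hEnn : 0 ≤ μ * S := by
    rw [← hE1]
    exact Finset.sum_nonneg fun x _ => mul_nonneg (hm x).le (gam_nonneg mw ww hm hwnn f x)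
  have hμ : 0 ≤ μ := by by_contra hc; push_neg at hc; nlinarith
  have hsum2 : ∑ x, mw x * gam2 (glap mw ww) f x = μ * (μ * S) := by
    have h1 : ∀ x, mw x * gam2 (glap mw ww) f x
        = mw x * glap mw ww (gam (glap mw ww) f f) x / 2
          - mw x * (-μ * gam (glap mw ww) f f x) := by
      intro x; rw [gam2, gam_eigen mw ww f μ hf]; ring
    simp only [h1]
    rw [Finset.sum_sub_distrib]
    rw [show (∑ x, mw x * glap mw ww (gam (glap mw ww) f f) x / 2)
        = (∑ x, mw x * glap mw ww (gam (glap mw ww) f f) x) / 2 from by rw [Finset.sum_div]]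
    rw [sum_glap mw ww hm' hsym]
    rw [show (∑ x, mw x * (-μ * gam (glap mw ww) f f x)) = -μ * (μ * S) from by
      rw [← hE1, Finset.mul_sum]; exact Finset.sum_congr rfl fun x _ => by ring]
    ring
  have hsq : ∑ x, mw x * (glap mw ww f x)^2 = μ^2 * S := by
    rw [hSdef, Finset.mul_sum]
    exact Finset.sum_congr rfl fun x _ => by rw [hf]; ring
  have hineq : (1/n) * (μ^2 * S) + K * (μ * S) ≤ μ * (μ * S) := by
    rw [← hsum2, ← hsq, ← hE1]
    rw [Finset.mul_sum, Finset.mul_sum, ← Finset.sum_add_distrib]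
    refine Finset.sum_le_sum fun x _ => ?_
    have := hCD f x
    calc (1/n) * (mw x * glap mw ww f x ^ 2) + K * (mw x * gam (glap mw ww) f f x)
        = mw x * ((1/n) * glap mw ww f x ^ 2 + K * gam (glap mw ww) f f x) := by ring
      _ ≤ mw x * gam2 (glap mw ww) f x := mul_le_mul_of_nonneg_left this (hm x).le
  rcases eq_or_lt_of_le hμ with h0 | hμpos
  · exact Or.inl h0.symm
  · right
    have hn0 : (0:ℝ) < n := by linarith
    have key : μ^2 * S + n * (K * (μ * S)) ≤ n * (μ * (μ * S)) := by
      have := mul_le_mul_of_nonneg_left hineq hn0.le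
      have e : n * (1/n * (μ^2 * S)) = μ^2 * S := by field_simp
      linarith [this, e]
    rw [div_le_iff₀ (by linarith : (0:ℝ) < n - 1)]
    nlinarith [key, mul_pos hμpos hS, hS, hμpos]
end generic

lemma glap_lincomb {W : Type*} [Fintype W] (mw : W → ℝ) (ww : W → W → ℝ)
    (a b : ℝ) (u v : W → ℝ) :
    glap mw ww (fun y => a * u y + b * v y) = fun x => a * glap mw ww u x + b * glap mw ww v x := by
  funext x
  simp only [glap]
  rw [show (∑ y, (a * u y + b * v y - (a * u x + b * v x)) * ww x y)
      = a * (∑ y, (u y - u x) * ww x y) + b * (∑ y, (v y - v x) * ww x y) from by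
    rw [Finset.mul_sum, Finset.mul_sum, ← Finset.sum_add_distrib]
    exact Finset.sum_congr rfl fun y _ => by ring]
  ring

lemma assembly {W : Type*} [Fintype W] (mw : W → ℝ) (L : (W → ℝ) → (W → ℝ))
    (φ0 φ1 : W → ℝ) (l0 l1 : ℝ) (hl : l0 ≤ l1)
    (h00 : ∑ x, φ0 x * φ0 x * mw x = 1) (h11 : ∑ x, φ1 x * φ1 x * mw x = 1)
    (h01 : ∑ x, φ0 x * φ1 x * mw x = 0)
    (he0 : L φ0 = fun x => -l0 * φ0 x) (he1 : L φ1 = fun x => -l1 * φ1 x)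
    (hLlin : ∀ a b : ℝ, L (fun x => a * φ0 x + b * φ1 x)
       = fun x => a * L φ0 x + b * L φ1 x)
    (μ : ℝ)
    (hP : ∀ u : W → ℝ, (∑ x, mw x * u x) = 0 →
       μ * ∑ x, mw x * u x ^ 2 ≤ ∑ x, mw x * u x * (-(L u x))) :
    μ ≤ l1 := by
  have main : ∀ a b : ℝ, a * (∑ x, mw x * φ0 x) + b * (∑ x, mw x * φ1 x) = 0 →
      0 < a^2 + b^2 → μ ≤ l1 := by
    intro a b hab hab2
    have hmean : ∑ x, mw x * (a * φ0 x + b * φ1 x) = 0 := by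
      rw [show (∑ x, mw x * (a * φ0 x + b * φ1 x))
          = a * (∑ x, mw x * φ0 x) + b * (∑ x, mw x * φ1 x) from by
        rw [Finset.mul_sum, Finset.mul_sum, ← Finset.sum_add_distrib]
        exact Finset.sum_congr rfl fun x _ => by ring]
      exact hab
    have hsq : ∑ x, mw x * (a * φ0 x + b * φ1 x) ^ 2 = a^2 + b^2 := by
      rw [show (∑ x, mw x * (a * φ0 x + b * φ1 x) ^ 2)
          = a^2 * (∑ x, φ0 x * φ0 x * mw x) + (2*a*b) * (∑ x, φ0 x * φ1 x * mw x)
            + b^2 * (∑ x, φ1 x * φ1 x * mw x) from by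
        rw [Finset.mul_sum, Finset.mul_sum, Finset.mul_sum, ← Finset.sum_add_distrib,
          ← Finset.sum_add_distrib]
        exact Finset.sum_congr rfl fun x _ => by ring]
      rw [h00, h01, h11]; ring
    have hLu : L (fun x => a * φ0 x + b * φ1 x)
        = fun x => a * (-l0 * φ0 x) + b * (-l1 * φ1 x) := by
      rw [hLlin a b, he0, he1]
    have hray : ∑ x, mw x * (a * φ0 x + b * φ1 x)
        * (-(L (fun x => a * φ0 x + b * φ1 x) x)) = a^2 * l0 + b^2 * l1 := by
      simp only [hLu]
      rw [show (∑ x, mw x * (a * φ0 x + b * φ1 x) * -(a * (-l0 * φ0 x) + b * (-l1 * φ1 x)))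
          = (a^2 * l0) * (∑ x, φ0 x * φ0 x * mw x)
            + (a*b*(l0+l1)) * (∑ x, φ0 x * φ1 x * mw x)
            + (b^2 * l1) * (∑ x, φ1 x * φ1 x * mw x) from by
        rw [Finset.mul_sum, Finset.mul_sum, Finset.mul_sum, ← Finset.sum_add_distrib,
          ← Finset.sum_add_distrib]
        exact Finset.sum_congr rfl fun x _ => by ring]
      rw [h00, h01, h11]; ring
    have hchain := hP (fun x => a * φ0 x + b * φ1 x) hmean
    rw [hsq, hray] at hchain
    by_contra hcon
    push_neg at hcon
    nlinarith [mul_pos (by linarith : (0:ℝ) < μ - l1) hab2,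
      mul_le_mul_of_nonneg_left hl (sq_nonneg a)]
  by_cases hc0 : (∑ x, mw x * φ0 x) = 0
  · by_cases hc1 : (∑ x, mw x * φ1 x) = 0
    · exact main 1 0 (by rw [hc0, hc1]; ring) (by norm_num)
    · refine main (∑ x, mw x * φ1 x) (-(∑ x, mw x * φ0 x)) (by ring) ?_
      have h1 : 0 < (∑ x, mw x * φ1 x)^2 := by positivity
      nlinarith [sq_nonneg (∑ x, mw x * φ0 x)]
  · refine main (∑ x, mw x * φ1 x) (-(∑ x, mw x * φ0 x)) (by ring) ?_
    have h1 : 0 < (∑ x, mw x * φ0 x)^2 := by positivity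
    nlinarith [sq_nonneg (∑ x, mw x * φ1 x)]
section poin
variable {W : Type*} [Fintype W] [DecidableEq W] (mw : W → ℝ) (ww : W → W → ℝ)

lemma poincare (hm : ∀ x, 0 < mw x) (hsym : ∀ x y, ww x y = ww y x)
    (μstar : ℝ) (hμstar : 0 < μstar)
    (hdich : ∀ (f : W → ℝ) (μ : ℝ), f ≠ 0 → glap mw ww f = (fun x => -μ * f x) →
      μ = 0 ∨ μstar ≤ μ)
    (hker : ∀ f : W → ℝ, glap mw ww f = (fun x => -(0:ℝ) * f x) → ∃ k, ∀ x, f x = k)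
    (u : W → ℝ) (hu : ∑ x, mw x * u x = 0) :
    μstar * ∑ x, mw x * u x ^ 2 ≤ ∑ x, mw x * u x * (-(glap mw ww u x)) := by
  set s : W → ℝ := fun x => Real.sqrt (mw x) with hsdef
  have hs : ∀ x, 0 < s x := fun x => Real.sqrt_pos.mpr (hm x)
  have hss : ∀ x, s x * s x = mw x := fun x => Real.mul_self_sqrt (hm x).le
  -- the conjugated matrix
  set C : Matrix W W ℝ :=
    fun x y => ((if x = y then ∑ z, ww x z else 0) - ww x y) / (s x * s y) with hCdef
  have hC : C.IsHermitian := by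
    unfold Matrix.IsHermitian
    ext x y
    rw [Matrix.conjTranspose_apply, star_trivial]; simp only [hCdef]
    rw [hsym y x]
    by_cases h : x = y
    · subst h; simp
    · rw [if_neg h, if_neg (Ne.symm h), mul_comm (s y) (s x)]
  -- key mulVec computation
  have hCv : ∀ g : W → ℝ, C *ᵥ (fun x => s x * g x) = fun x => s x * (-(glap mw ww g x)) := by
    intro g
    funext x
    show ∑ y, C x y * (s y * g y) = _
    have step1 : ∀ y, C x y * (s y * g y)
        = ((if x = y then ∑ z, ww x z else 0) * g y - ww x y * g y) / s x := by
      intro y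
      have h1 := (hs x).ne'
      have h2 := (hs y).ne'
      rcases eq_or_ne x y with h | h
      · simp only [hCdef, if_pos h]
        field_simp
      · simp only [hCdef, if_neg h]
        field_simp
    rw [Finset.sum_congr rfl fun y _ => step1 y]
    rw [← Finset.sum_div, Finset.sum_sub_distrib]
    simp only [ite_mul, zero_mul]
    rw [Finset.sum_ite_eq univ x (fun y => (∑ z, ww x z) * g y)]
    rw [if_pos (Finset.mem_univ x)]
    have expand : ∑ y, (g y - g x) * ww x y
        = (∑ y, ww x y * g y) - g x * ∑ z, ww x z := by
      rw [show (∑ y, (g y - g x) * ww x y) = ∑ y, (ww x y * g y - g x * ww x y) from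
        Finset.sum_congr rfl fun y _ => by ring]
      rw [Finset.sum_sub_distrib, ← Finset.mul_sum]
    rw [glap, expand]
    have h1 := (hs x).ne'
    have hmx : mw x = s x * s x := (hss x).symm
    rw [hmx]
    field_simp
    ring
  -- spectral data
  set U : Matrix W W ℝ := (Matrix.IsHermitian.eigenvectorUnitary hC : Matrix W W ℝ) with hUdef
  have hU2 : U * star U = 1 :=
    Matrix.mem_unitaryGroup_iff.mp (Matrix.IsHermitian.eigenvectorUnitary hC).2
  set μ : W → ℝ := hC.eigenvalues with hμdef
  set v : W → ℝ := fun x => s x * u x with hvdef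
  set cv : W → ℝ := star U *ᵥ v with hcdef
  have hUapp : ∀ x j, U x j = (hC.eigenvectorBasis j) x := fun x j =>
    hC.eigenvectorUnitary_apply x j
  have heig : ∀ j, glap mw ww (fun x => (hC.eigenvectorBasis j) x / s x)
      = fun x => -(μ j) * ((hC.eigenvectorBasis j) x / s x) := by
    intro j
    set fj : W → ℝ := fun x => (hC.eigenvectorBasis j) x / s x with hfjdef
    have hsf : (fun x => s x * fj x) = fun x => (hC.eigenvectorBasis j) x := by
      funext x
      rw [hfjdef, mul_comm, div_mul_cancel₀ _ (hs x).ne']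
    have h1 : C *ᵥ (fun x => s x * fj x) = fun x => s x * (-(glap mw ww fj x)) := hCv fj
    rw [hsf] at h1
    have h2 := hC.mulVec_eigenvectorBasis j
    funext x
    have e3 : (C *ᵥ fun y => (hC.eigenvectorBasis j) y) x
        = μ j * (hC.eigenvectorBasis j) x := by
      have e2 := congrFun h2 x
      simpa using e2
    have h5 : s x * (-(glap mw ww fj x)) = μ j * (s x * fj x) := by
      rw [congrFun hsf x, ← congrFun h1 x]
      exact e3
    have hsx := (hs x).ne'
    have h6 : -(glap mw ww fj x) = μ j * fj x := by
      apply mul_left_cancel₀ hsx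
      rw [h5]; ring
    have : glap mw ww fj x = -(μ j) * fj x := by linarith [h6]
    simpa using this
  have hfj0 : ∀ j, (fun x => (hC.eigenvectorBasis j) x / s x) ≠ 0 := by
    intro j hzero
    apply hC.eigenvectorBasis.orthonormal.ne_zero j
    ext x
    have h7 := congrFun hzero x
    simp only [Pi.zero_apply] at h7 ⊢
    have hsx := (hs x).ne'
    exact (div_eq_zero_iff.mp h7).resolve_right hsx
  have hdichj : ∀ j, μ j = 0 ∨ μstar ≤ μ j := fun j =>
    hdich _ (μ j) (hfj0 j) (heig j)
  have hzero : ∀ j, μ j = 0 → cv j = 0 := by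
    intro j hj
    obtain ⟨k, hk⟩ := hker (fun x => (hC.eigenvectorBasis j) x / s x) (by
      have h8 := heig j; rw [hj] at h8; exact h8)
    have hbk : ∀ x, (hC.eigenvectorBasis j) x = s x * k := by
      intro x
      have h9 := hk x
      have hsx := (hs x).ne'
      field_simp at h9
      linarith [h9]
    have h10 : cv j = ∑ x, (s x * k) * (s x * u x) := by
      rw [hcdef]
      simp only [Matrix.mulVec, dotProduct]
      refine Finset.sum_congr rfl fun x _ => ?_
      rw [Matrix.star_apply, star_trivial, hUapp x j, hbk x]
    rw [h10, show (∑ x, (s x * k) * (s x * u x)) = k * ∑ x, mw x * u x from by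
      rw [Finset.mul_sum]; exact Finset.sum_congr rfl fun x _ => by rw [← hss x]; ring]
    rw [hu, mul_zero]
  have hUstar : star U = Uᵀ := by
    rw [Matrix.star_eq_conjTranspose, Matrix.conjTranspose_eq_transpose_of_trivial]
  have hUcv : U *ᵥ cv = v := by
    rw [hcdef, Matrix.mulVec_mulVec, hU2, Matrix.one_mulVec]
  have hvv : cv ⬝ᵥ cv = v ⬝ᵥ v := by
    have h6 : cv ᵥ* star U = v := by
      rw [← Matrix.mulVec_transpose, hUstar, Matrix.transpose_transpose, hUcv]
    calc cv ⬝ᵥ cv = cv ⬝ᵥ (star U *ᵥ v) := by rw [← hcdef]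
      _ = (cv ᵥ* star U) ⬝ᵥ v := Matrix.dotProduct_mulVec cv _ v
      _ = v ⬝ᵥ v := by rw [h6]
  have hspec := hC.spectral_theorem
  rw [Unitary.conjStarAlgAut_apply, ← hUdef, ← hμdef] at hspec
  have hdiag : Matrix.diagonal (RCLike.ofReal ∘ μ) = Matrix.diagonal μ := by
    have hco : RCLike.ofReal ∘ μ = μ := by
      funext j
      simp [RCLike.ofReal_real_eq_id]
    rw [hco]
  rw [hdiag] at hspec
  have hvCv : v ⬝ᵥ (C *ᵥ v) = ∑ j, cv j * (μ j * cv j) := by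
    conv_lhs => rw [hspec]
    rw [← Matrix.mulVec_mulVec, ← Matrix.mulVec_mulVec, ← hcdef]
    rw [Matrix.dotProduct_mulVec, ← Matrix.mulVec_transpose, ← hUstar, ← hcdef]
    simp only [dotProduct, Matrix.mulVec_diagonal]
  have hlhs : ∑ x, mw x * u x * (-(glap mw ww u x)) = v ⬝ᵥ (C *ᵥ v) := by
    rw [hCv u]
    simp only [dotProduct, hvdef]
    exact Finset.sum_congr rfl fun x _ => by rw [← hss x]; ring
  have hnorm : ∑ x, mw x * u x ^ 2 = v ⬝ᵥ v := by
    simp only [dotProduct, hvdef]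
    exact Finset.sum_congr rfl fun x _ => by rw [← hss x]; ring
  have hfinal : μstar * (cv ⬝ᵥ cv) ≤ ∑ j, cv j * (μ j * cv j) := by
    rw [dotProduct, Finset.mul_sum]
    refine Finset.sum_le_sum fun j _ => ?_
    rcases hdichj j with h0 | hle
    · rw [hzero j h0]; simp
    · nlinarith [sq_nonneg (cv j), hμstar]
  calc μstar * ∑ x, mw x * u x ^ 2 = μstar * (cv ⬝ᵥ cv) := by rw [hnorm, ← hvv]
    _ ≤ ∑ j, cv j * (μ j * cv j) := hfinal
    _ = v ⬝ᵥ (C *ᵥ v) := hvCv.symm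
    _ = ∑ x, mw x * u x * (-(glap mw ww u x)) := hlhs.symm
end poin

theorem stmt_19 {V : Type*} [Fintype V] [DecidableEq V]
    (G : SimpleGraph V) (hconn : G.Connected)
    (m : V → ℝ) (hm : ∀ x, 0 < m x)
    (w : V → V → ℝ) (hwsymm : ∀ x y, w x y = w y x)
    (hwpos : ∀ x y, G.Adj x y → 0 < w x y)
    (hw0 : ∀ x y, ¬ G.Adj x y → w x y = 0)
    (B : Finset V) (hB : B.Nonempty)
    (hBB : ∀ x ∈ B, ∀ y ∈ B, ¬ G.Adj x y)
    (hBint : ∀ x ∈ B, ∃ y, y ∉ B ∧ G.Adj x y)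
    (lam : Fin (Fintype.card {x : V // x ∉ B}) → ℝ) (hlammono : Monotone lam)
    (hlam : IsEigenBasis (fun x : {x : V // x ∉ B} => m x.1) (dlap m w B) (fun i => -(lam i)))
    (ν : Fin (Fintype.card {x : V // x ∉ B}) → ℝ) (hνmono : Monotone ν)
    (hν : IsEigenBasis (fun x : {x : V // x ∉ B} => m x.1) (nlap m w B) (fun i => -(ν i)))
    (hintconn : (G.induce {x : V | x ∉ B}).Connected)
    (K n : ℝ) (hK : 0 < K) (hn : 1 < n)
    (hCD : ∀ (f : {x : V // x ∉ B} → ℝ) (x : {x : V // x ∉ B}),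
      (1 / n) * (olap m w B f x) ^ 2 + K * gam (olap m w B) f f x ≤ gam2 (olap m w B) f x)
    :
    (∀ h : 1 < Fintype.card {x : V // x ∉ B},
        n * K / (n - 1) + (⨅ x : {x : V // x ∉ B}, degb m w B x.1) ≤ lam ⟨1, h⟩) ∧
      (∀ h : 1 < Fintype.card {x : V // x ∉ B}, n * K / (n - 1) ≤ ν ⟨1, h⟩) := by
  classical
  obtain ⟨φ, hφorth, hφeig⟩ := hlam
  obtain ⟨ψ, hψorth, hψeig⟩ := hν
  have hwnn : ∀ x y, 0 ≤ w x y := by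
    intro x y
    by_cases hadj : G.Adj x y
    · exact (hwpos x y hadj).le
    · rw [hw0 x y hadj]
  have hmne : ∀ x, m x ≠ 0 := fun x => (hm x).ne'
  have hglap : olap m w B = glap (fun x : {x : V // x ∉ B} => m x.1)
      (fun x y : {x : V // x ∉ B} => w x.1 y.1) := rfl
  set μs := n * K / (n - 1) with hμs
  have hμspos : 0 < μs := by
    rw [hμs]
    apply div_pos (by nlinarith) (by linarith)
  -- dichotomy for interior Laplacian eigenvalues
  have hdich : ∀ (f : {x : V // x ∉ B} → ℝ) (μ' : ℝ), f ≠ 0 →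
      glap (fun x : {x : V // x ∉ B} => m x.1) (fun x y : {x : V // x ∉ B} => w x.1 y.1) f
        = (fun x => -μ' * f x) → μ' = 0 ∨ μs ≤ μ' := by
    intro f μ' hf0 hf
    exact dichotomy _ _ (fun x => hm x.1) (fun x y => hwsymm x.1 y.1)
      (fun x y => hwnn x.1 y.1) K n hK hn
      (fun f x => by rw [← hglap]; exact hCD f x) f hf0 μ' hf
  -- kernel of interior Laplacian is constants
  have hker : ∀ f : {x : V // x ∉ B} → ℝ,
      glap (fun x : {x : V // x ∉ B} => m x.1) (fun x y : {x : V // x ∉ B} => w x.1 y.1) f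
        = (fun x => -(0:ℝ) * f x) → ∃ k, ∀ x, f x = k := by
    intro f hf
    have hE : ∑ x : {x : V // x ∉ B}, m x.1 * f x
        * glap (fun x : {x : V // x ∉ B} => m x.1)
            (fun x y : {x : V // x ∉ B} => w x.1 y.1) f x = 0 := by
      rw [hf]
      simp
    have hE2 := energy (fun x : {x : V // x ∉ B} => m x.1)
      (fun x y : {x : V // x ∉ B} => w x.1 y.1)
      (fun x => (hm x.1).ne') (fun x y => hwsymm x.1 y.1) f
    have hzero2 : ∑ x : {x : V // x ∉ B}, ∑ y : {x : V // x ∉ B},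
        w x.1 y.1 * (f x - f y)^2 = 0 := by
      rw [hE] at hE2
      linarith [hE2]
    have hterm : ∀ x y : {x : V // x ∉ B}, w x.1 y.1 * (f x - f y)^2 = 0 := by
      intro x y
      have hnn : ∀ a : {x : V // x ∉ B}, ∀ b : {x : V // x ∉ B},
          0 ≤ w a.1 b.1 * (f a - f b)^2 :=
        fun a b => mul_nonneg (hwnn a.1 b.1) (sq_nonneg _)
      have h1 := (Finset.sum_eq_zero_iff_of_nonneg
        (fun a _ => Finset.sum_nonneg fun b _ => hnn a b)).mp hzero2 x (Finset.mem_univ x)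
      exact (Finset.sum_eq_zero_iff_of_nonneg
        (fun b _ => hnn x b)).mp h1 y (Finset.mem_univ y)
    have hadjeq : ∀ x y : {x : V // x ∉ B}, G.Adj x.1 y.1 → f x = f y := by
      intro x y ha
      have hwxy := (hwpos x.1 y.1 ha).ne'
      have h2 : (f x - f y)^2 = 0 := by
        rcases mul_eq_zero.mp (hterm x y) with h | h
        · exact absurd h hwxy
        · exact h
      have h3 : f x - f y = 0 := by
        have := sq_eq_zero_iff.mp h2
        exact this
      linarith
    obtain ⟨b0, hb0⟩ := hB
    obtain ⟨y0, hy0B, _⟩ := hBint b0 hb0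
    refine ⟨f ⟨y0, hy0B⟩, ?_⟩
    intro x
    have key : ∀ a b : ↥{x : V | x ∉ B}, f ⟨a.1, a.2⟩ = f ⟨b.1, b.2⟩ := by
      intro a b
      obtain ⟨p⟩ := hintconn.preconnected a b
      induction p with
      | nil => rfl
      | cons hadj q ih =>
        refine Eq.trans ?_ ih
        have h4 : G.Adj _ _ := (SimpleGraph.comap_adj.mp hadj)
        exact hadjeq _ _ h4
    exact key ⟨x.1, x.2⟩ ⟨y0, hy0B⟩
  -- Poincaré inequality for the interior Laplacian
  have hpoin : ∀ u : {x : V // x ∉ B} → ℝ, (∑ x : {x : V // x ∉ B}, m x.1 * u x) = 0 →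
      μs * ∑ x : {x : V // x ∉ B}, m x.1 * u x ^ 2
        ≤ ∑ x : {x : V // x ∉ B}, m x.1 * u x * (-(olap m w B u x)) := by
    intro u hu
    have := poincare (fun x : {x : V // x ∉ B} => m x.1)
      (fun x y : {x : V // x ∉ B} => w x.1 y.1) (fun x => hm x.1)
      (fun x y => hwsymm x.1 y.1) μs hμspos hdich hker u hu
    rw [hglap]
    exact this
  -- splitting sums over V
  have hsplit : ∀ h : V → ℝ, ∑ y, h y = (∑ y ∈ B, h y) + ∑ y : {x : V // x ∉ B}, h y.1 := by
    intro h
    rw [← Finset.sum_filter_add_sum_filter_not Finset.univ (· ∈ B) h]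
    congr 1
    · congr 1
      ext x
      simp
    · rw [Finset.sum_subtype]
      intro x; simp
  -- Dirichlet Laplacian formula
  have hdlap : ∀ (u : {x : V // x ∉ B} → ℝ) (x : {x : V // x ∉ B}),
      dlap m w B u x = olap m w B u x - degb m w B x.1 * u x := by
    intro u x
    show glap m w (E0 B u) x.1 = _
    rw [glap]
    rw [hsplit (fun y => (E0 B u y - E0 B u x.1) * w x.1 y)]
    have e0x : E0 B u x.1 = u x := by rw [E0, dif_neg x.2]
    have hBsum : ∑ y ∈ B, (E0 B u y - E0 B u x.1) * w x.1 y
        = -(u x) * ∑ y ∈ B, w x.1 y := by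
      rw [Finset.mul_sum]
      refine Finset.sum_congr rfl fun y hy => ?_
      rw [E0, dif_pos hy, e0x]
      ring
    have hTsum : ∑ y : {x : V // x ∉ B}, (E0 B u y.1 - E0 B u x.1) * w x.1 y.1
        = ∑ y : {x : V // x ∉ B}, (u y - u x) * w x.1 y.1 := by
      refine Finset.sum_congr rfl fun y _ => ?_
      rw [e0x, E0, dif_neg y.2]
    rw [hBsum, hTsum, olap, degb]
    ring
  -- boundary values of the Neumann extension are harmonic
  have hden : ∀ x ∈ B, 0 < ∑ y : {x : V // x ∉ B}, w x y.1 := by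
    intro x hx
    obtain ⟨y0, hy0, hadj⟩ := hBint x hx
    exact Finset.sum_pos' (fun y _ => hwnn x y.1)
      ⟨⟨y0, hy0⟩, Finset.mem_univ _, hwpos x y0 hadj⟩
  have hnbd : ∀ (u : {x : V // x ∉ B} → ℝ), ∀ x ∈ B, glap m w (N0 w B u) x = 0 := by
    intro u x hx
    rw [glap]
    rw [hsplit (fun y => (N0 w B u y - N0 w B u x) * w x y)]
    have h1 : ∑ y ∈ B, (N0 w B u y - N0 w B u x) * w x y = 0 :=
      Finset.sum_eq_zero fun y hy => by rw [hw0 x y (hBB x hx y hy), mul_zero]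
    have hNx : N0 w B u x = (∑ y : {x : V // x ∉ B}, u y * w x y.1)
        / (∑ y : {x : V // x ∉ B}, w x y.1) := by
      rw [N0, dif_pos hx]
    have h2 : ∑ y : {x : V // x ∉ B}, (N0 w B u y.1 - N0 w B u x) * w x y.1 = 0 := by
      rw [show (∑ y : {x : V // x ∉ B}, (N0 w B u y.1 - N0 w B u x) * w x y.1)
          = (∑ y : {x : V // x ∉ B}, u y * w x y.1)
            - N0 w B u x * ∑ y : {x : V // x ∉ B}, w x y.1 from by
        rw [Finset.mul_sum, ← Finset.sum_sub_distrib]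
        refine Finset.sum_congr rfl fun y _ => ?_
        rw [N0, dif_neg y.2]
        ring]
      rw [hNx, div_mul_cancel₀ _ (hden x hx).ne', sub_self]
    rw [h1, h2]
    simp
  -- Neumann energy dominates interior energy
  have hnlapE : ∀ u : {x : V // x ∉ B} → ℝ,
      ∑ x : {x : V // x ∉ B}, m x.1 * u x * (-(olap m w B u x))
        ≤ ∑ x : {x : V // x ∉ B}, m x.1 * u x * (-(nlap m w B u x)) := by
    intro u
    have hL : ∑ x : {x : V // x ∉ B}, m x.1 * u x * (-(olap m w B u x))
        = (1/2) * ∑ x : {x : V // x ∉ B}, ∑ y : {x : V // x ∉ B},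
            w x.1 y.1 * (u x - u y)^2 := by
      have hV := energy (fun x : {x : V // x ∉ B} => m x.1)
        (fun x y : {x : V // x ∉ B} => w x.1 y.1)
        (fun x => (hm x.1).ne') (fun x y => hwsymm x.1 y.1) u
      rw [hglap]
      have hneg : ∑ x : {x : V // x ∉ B}, m x.1 * u x
          * (-(glap (fun x : {x : V // x ∉ B} => m x.1)
              (fun x y : {x : V // x ∉ B} => w x.1 y.1) u x))
          = -(∑ x : {x : V // x ∉ B}, m x.1 * u x
              * glap (fun x : {x : V // x ∉ B} => m x.1)
                  (fun x y : {x : V // x ∉ B} => w x.1 y.1) u x) := by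
        rw [← Finset.sum_neg_distrib]
        exact Finset.sum_congr rfl fun x _ => by ring
      rw [hneg, hV]
      ring
    have hswap : ∑ x : {x : V // x ∉ B}, m x.1 * u x * (-(nlap m w B u x))
        = ∑ x, m x * N0 w B u x * (-(glap m w (N0 w B u) x)) := by
      rw [hsplit (fun x => m x * N0 w B u x * (-(glap m w (N0 w B u) x)))]
      have hBzero : ∑ x ∈ B, m x * N0 w B u x * (-(glap m w (N0 w B u) x)) = 0 :=
        Finset.sum_eq_zero fun x hx => by rw [hnbd u x hx]; ring
      rw [hBzero, zero_add]
      refine (Finset.sum_congr rfl fun x _ => ?_).symm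
      rw [show N0 w B u x.1 = u x from by rw [N0, dif_neg x.2]]
      rfl
    have hR : ∑ x : {x : V // x ∉ B}, m x.1 * u x * (-(nlap m w B u x))
        = (1/2) * ∑ x, ∑ y, w x y * (N0 w B u x - N0 w B u y)^2 := by
      have hV := energy m w hmne hwsymm (N0 w B u)
      have hneg : ∑ x, m x * N0 w B u x * (-(glap m w (N0 w B u) x))
          = -(∑ x, m x * N0 w B u x * glap m w (N0 w B u) x) := by
        rw [← Finset.sum_neg_distrib]
        exact Finset.sum_congr rfl fun x _ => by ring
      rw [hswap, hneg, hV]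
      ring
    have hFnn : ∀ x y : V, 0 ≤ w x y * (N0 w B u x - N0 w B u y)^2 :=
      fun x y => mul_nonneg (hwnn x y) (sq_nonneg _)
    have hTV : ∑ x : {x : V // x ∉ B}, ∑ y : {x : V // x ∉ B}, w x.1 y.1 * (u x - u y)^2
        = ∑ x ∈ Finset.univ.filter (· ∉ B), ∑ y ∈ Finset.univ.filter (· ∉ B),
            w x y * (N0 w B u x - N0 w B u y)^2 := by
      have inner_eq : ∀ xv : V,
          (∑ y ∈ Finset.univ.filter (· ∉ B), w xv y * (N0 w B u xv - N0 w B u y)^2)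
            = ∑ y : {x : V // x ∉ B}, w xv y.1 * (N0 w B u xv - N0 w B u y.1)^2 :=
        fun xv => Finset.sum_subtype _ (fun y => by simp) _
      calc ∑ x : {x : V // x ∉ B}, ∑ y : {x : V // x ∉ B}, w x.1 y.1 * (u x - u y)^2
          = ∑ x : {x : V // x ∉ B}, ∑ y : {x : V // x ∉ B},
              w x.1 y.1 * (N0 w B u x.1 - N0 w B u y.1)^2 := by
            refine Finset.sum_congr rfl fun x _ => Finset.sum_congr rfl fun y _ => ?_
            rw [show N0 w B u x.1 = u x from by rw [N0, dif_neg x.2],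
              show N0 w B u y.1 = u y from by rw [N0, dif_neg y.2]]
        _ = ∑ x : {x : V // x ∉ B}, ∑ y ∈ Finset.univ.filter (· ∉ B),
              w x.1 y * (N0 w B u x.1 - N0 w B u y)^2 :=
            Finset.sum_congr rfl fun x _ => (inner_eq x.1).symm
        _ = ∑ x ∈ Finset.univ.filter (· ∉ B), ∑ y ∈ Finset.univ.filter (· ∉ B),
              w x y * (N0 w B u x - N0 w B u y)^2 :=
            (Finset.sum_subtype _ (fun x => by simp) (fun xv =>
              ∑ y ∈ Finset.univ.filter (· ∉ B), w xv y * (N0 w B u xv - N0 w B u y)^2)).symm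
    have hmono : (∑ x : {x : V // x ∉ B}, ∑ y : {x : V // x ∉ B}, w x.1 y.1 * (u x - u y)^2)
        ≤ ∑ x, ∑ y, w x y * (N0 w B u x - N0 w B u y)^2 := by
      rw [hTV]
      calc ∑ x ∈ Finset.univ.filter (· ∉ B), ∑ y ∈ Finset.univ.filter (· ∉ B),
            w x y * (N0 w B u x - N0 w B u y)^2
          ≤ ∑ x ∈ Finset.univ.filter (· ∉ B), ∑ y,
              w x y * (N0 w B u x - N0 w B u y)^2 :=
            Finset.sum_le_sum fun x _ => Finset.sum_le_sum_of_subset_of_nonneg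
              (Finset.filter_subset _ _) (fun y _ _ => hFnn x y)
        _ ≤ ∑ x, ∑ y, w x y * (N0 w B u x - N0 w B u y)^2 :=
            Finset.sum_le_sum_of_subset_of_nonneg (Finset.filter_subset _ _)
              (fun x _ _ => Finset.sum_nonneg fun y _ => hFnn x y)
    rw [hL, hR]
    linarith
  -- Rayleigh quotient of Dirichlet Laplacian
  have hdegbsum : ∀ u : {x : V // x ∉ B} → ℝ,
      ∑ x : {x : V // x ∉ B}, m x.1 * u x * (-(dlap m w B u x))
        = ∑ x : {x : V // x ∉ B}, m x.1 * u x * (-(olap m w B u x))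
          + ∑ x : {x : V // x ∉ B}, m x.1 * degb m w B x.1 * u x^2 := by
    intro u
    rw [← Finset.sum_add_distrib]
    exact Finset.sum_congr rfl fun x _ => by rw [hdlap u x]; ring
  constructor
  · -- Dirichlet estimate
    intro h
    have hle01 : (⟨0, by omega⟩ : Fin (Fintype.card {x : V // x ∉ B}))
        ≤ (⟨1, h⟩ : Fin (Fintype.card {x : V // x ∉ B})) := by
      simp [Fin.mk_le_mk]
    have hne01 : (⟨0, by omega⟩ : Fin (Fintype.card {x : V // x ∉ B}))
        ≠ (⟨1, h⟩ : Fin (Fintype.card {x : V // x ∉ B})) := by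
      simp [Fin.ext_iff]
    have h00 := hφorth ⟨0, by omega⟩ ⟨0, by omega⟩
    rw [if_pos rfl] at h00
    have h11 := hφorth ⟨1, h⟩ ⟨1, h⟩
    rw [if_pos rfl] at h11
    have h01 := hφorth ⟨0, by omega⟩ ⟨1, h⟩
    rw [if_neg hne01] at h01
    have hdmin : ∀ x : {x : V // x ∉ B},
        (⨅ x : {x : V // x ∉ B}, degb m w B x.1) ≤ degb m w B x.1 := fun x =>
      ciInf_le (Set.Finite.bddBelow (Set.finite_range _)) x
    refine assembly (fun x : {x : V // x ∉ B} => m x.1) (dlap m w B)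
      (φ ⟨0, by omega⟩) (φ ⟨1, h⟩) (lam ⟨0, by omega⟩) (lam ⟨1, h⟩)
      (hlammono hle01) h00 h11 h01 (hφeig ⟨0, by omega⟩) (hφeig ⟨1, h⟩) ?_ _ ?_
    · intro a b
      funext x
      have hE0lin : E0 B (fun y => a * φ ⟨0, by omega⟩ y + b * φ ⟨1, h⟩ y)
          = fun z => a * E0 B (φ ⟨0, by omega⟩) z + b * E0 B (φ ⟨1, h⟩) z := by
        funext z
        by_cases hz : z ∈ B
        · simp [E0, dif_pos hz]
        · simp [E0, dif_neg hz]
      show glap m w (E0 B _) x.1 = _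
      rw [hE0lin, glap_lincomb]
      rfl
    · intro u hu
      rw [hdegbsum u]
      have p1 := hpoin u hu
      have p2 : (⨅ x : {x : V // x ∉ B}, degb m w B x.1)
            * ∑ x : {x : V // x ∉ B}, m x.1 * u x ^ 2
          ≤ ∑ x : {x : V // x ∉ B}, m x.1 * degb m w B x.1 * u x^2 := by
        rw [Finset.mul_sum]
        refine Finset.sum_le_sum fun x _ => ?_
        have h1 : 0 ≤ m x.1 * u x^2 := mul_nonneg (hm x.1).le (sq_nonneg _)
        calc (⨅ x : {x : V // x ∉ B}, degb m w B x.1) * (m x.1 * u x^2)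
            ≤ degb m w B x.1 * (m x.1 * u x^2) :=
              mul_le_mul_of_nonneg_right (hdmin x) h1
          _ = m x.1 * degb m w B x.1 * u x ^2 := by ring
      have hsplit2 : (n * K / (n - 1) + (⨅ x : {x : V // x ∉ B}, degb m w B x.1))
            * ∑ x : {x : V // x ∉ B}, m x.1 * u x ^ 2
          = μs * (∑ x : {x : V // x ∉ B}, m x.1 * u x ^ 2)
            + (⨅ x : {x : V // x ∉ B}, degb m w B x.1)
              * ∑ x : {x : V // x ∉ B}, m x.1 * u x ^ 2 := by
        rw [hμs]; ring
      rw [hsplit2]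
      linarith
  · -- Neumann estimate
    intro h
    have hle01 : (⟨0, by omega⟩ : Fin (Fintype.card {x : V // x ∉ B}))
        ≤ (⟨1, h⟩ : Fin (Fintype.card {x : V // x ∉ B})) := by
      simp [Fin.mk_le_mk]
    have hne01 : (⟨0, by omega⟩ : Fin (Fintype.card {x : V // x ∉ B}))
        ≠ (⟨1, h⟩ : Fin (Fintype.card {x : V // x ∉ B})) := by
      simp [Fin.ext_iff]
    have h00 := hψorth ⟨0, by omega⟩ ⟨0, by omega⟩
    rw [if_pos rfl] at h00
    have h11 := hψorth ⟨1, h⟩ ⟨1, h⟩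
    rw [if_pos rfl] at h11
    have h01 := hψorth ⟨0, by omega⟩ ⟨1, h⟩
    rw [if_neg hne01] at h01
    have hres : μs ≤ ν ⟨1, h⟩ := by
      refine assembly (fun x : {x : V // x ∉ B} => m x.1) (nlap m w B)
        (ψ ⟨0, by omega⟩) (ψ ⟨1, h⟩) (ν ⟨0, by omega⟩) (ν ⟨1, h⟩)
        (hνmono hle01) h00 h11 h01 (hψeig ⟨0, by omega⟩) (hψeig ⟨1, h⟩) ?_ _ ?_
      · intro a b
        funext x
        have hN0lin : N0 w B (fun y => a * ψ ⟨0, by omega⟩ y + b * ψ ⟨1, h⟩ y)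
            = fun z => a * N0 w B (ψ ⟨0, by omega⟩) z + b * N0 w B (ψ ⟨1, h⟩) z := by
          funext z
          by_cases hz : z ∈ B
          · simp only [N0, dif_pos hz]
            rw [show (∑ y : {x : V // x ∉ B},
                  (a * ψ ⟨0, by omega⟩ y + b * ψ ⟨1, h⟩ y) * w z y.1)
                = a * (∑ y : {x : V // x ∉ B}, ψ ⟨0, by omega⟩ y * w z y.1)
                  + b * (∑ y : {x : V // x ∉ B}, ψ ⟨1, h⟩ y * w z y.1) from by
              rw [Finset.mul_sum, Finset.mul_sum, ← Finset.sum_add_distrib]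
              exact Finset.sum_congr rfl fun y _ => by ring]
            rw [add_div, mul_div_assoc, mul_div_assoc]
          · simp only [N0, dif_neg hz]
        show glap m w (N0 w B _) x.1 = _
        rw [hN0lin, glap_lincomb]
        rfl
      · intro u hu
        exact (hpoin u hu).trans (hnlapE u)
    rw [hμs] at hres
    exact hres
end
end
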